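/- arXiv:2604.11187 — 4 statements merged into one kernel-verified Lean document; each statement's English description precedes it below -/
import Mathlib

section
/- Let λ be a positive integer and let R_n^λ(x) = C_n^λ(x)/C_n^λ(1) be the normalized Gegenbauer polynomial. For every natural number n there exist nonnegative real numbers a_{n,j}, j = n, …, n+λ, such that for all t ∈ [0, π]: R_n^λ(cos t) (cos(t/2))^{2λ} = Σ_{j=n}^{n+λ} a_{n,j} R_{2j}^λ(cos(t/2)). -/
noncomputable def binomR (z : ℝ) (k : ℕ) : ℝ :=
  (∏ i ∈ Finset.range k, (z - i)) / (Nat.factorial k)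

/-- Jacobi polynomial `P_n^{(a,b)}(x)` (Szegő (4.3.2)), valid for all real parameters. -/
noncomputable def jacobiP (a b : ℝ) (n : ℕ) (x : ℝ) : ℝ :=
  ∑ s ∈ Finset.range (n + 1),
    binomR ((n : ℝ) + a) (n - s) * binomR ((n : ℝ) + b) s *
      ((x - 1) / 2) ^ s * ((x + 1) / 2) ^ (n - s)

/-- Normalized Gegenbauer polynomial `R_n` with parameter `lam`, via Jacobi polynomials. -/
noncomputable def gegenR (lam : ℝ) (n : ℕ) (x : ℝ) : ℝ :=
  jacobiP (lam - 1 / 2) (lam - 1 / 2) n x / jacobiP (lam - 1 / 2) (lam - 1 / 2) n 1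

lemma binomR_zero (z : ℝ) : binomR z 0 = 1 := by simp [binomR]

-- B1
lemma binomR_B1 (z : ℝ) (k : ℕ) :
    ((k : ℝ) + 1) * binomR z (k + 1) = (z - k) * binomR z k := by
  unfold binomR
  rw [Finset.prod_range_succ, Nat.factorial_succ]
  push_cast
  field_simp

-- A1 : (k+1) * binomR z (k+1) = z * binomR (z-1) k
lemma binomR_A1 (z : ℝ) (k : ℕ) :
    ((k : ℝ) + 1) * binomR z (k + 1) = z * binomR (z - 1) k := by
  unfold binomR
  rw [Finset.prod_range_succ', Nat.factorial_succ]
  push_cast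
  rw [Finset.prod_congr rfl fun i (hi : i ∈ Finset.range k) =>
    show z - ((i:ℝ) + 1) = z - 1 - (i:ℝ) by ring]
  field_simp
  ring

-- A2 : (z - k) * binomR z k = z * binomR (z-1) k
lemma binomR_A2 (z : ℝ) (k : ℕ) :
    (z - k) * binomR z k = z * binomR (z - 1) k := by
  rw [← binomR_A1, binomR_B1]

-- Pascal
lemma binomR_pascal (z : ℝ) (k : ℕ) :
    binomR (z + 1) (k + 1) = binomR z (k + 1) + binomR z k := by
  have hk : ((k : ℝ) + 1) ≠ 0 := by positivity
  have h1 := binomR_A1 (z + 1) k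
  have h2 := binomR_B1 z k
  have h3 : (z + 1 - 1) = z := by ring
  rw [h3] at h1
  have : ((k:ℝ)+1) * binomR (z+1) (k+1) = ((k:ℝ)+1) * (binomR z (k+1) + binomR z k) := by
    rw [h1, mul_add, h2]; ring
  exact mul_left_cancel₀ hk this

lemma binomR_pos (z : ℝ) (k : ℕ) (h : (k : ℝ) - 1 < z) : 0 < binomR z k := by
  unfold binomR
  apply div_pos
  · apply Finset.prod_pos
    intro i hi
    have : (i : ℝ) + 1 ≤ k := by exact_mod_cast Finset.mem_range.mp hi
    linarith
  · positivity

lemma jacobiP_zero (a b x : ℝ) : jacobiP a b 0 x = 1 := by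
  simp [jacobiP, binomR_zero]

lemma jacobiP_one (a b : ℝ) (n : ℕ) : jacobiP a b n 1 = binomR ((n : ℝ) + a) n := by
  unfold jacobiP
  rw [Finset.sum_eq_single 0]
  · simp [binomR_zero]
  · intro s hs hs0
    have : (1 - 1 : ℝ) / 2 = 0 := by norm_num
    rw [this, zero_pow hs0]; ring
  · simp

-- helper: extend a sum over range (n+1) to range (n+2)
lemma sum_ext (h : ℕ → ℝ) (n : ℕ) :
    ∑ s ∈ Finset.range (n + 1), h s
      = ∑ s ∈ Finset.range (n + 2), if s ≤ n then h s else 0 := by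
  symm
  rw [Finset.sum_range_succ, if_neg (by omega), add_zero]
  exact Finset.sum_congr rfl fun s hs => if_pos (Nat.lt_succ_iff.mp (Finset.mem_range.mp hs))
lemma sum_shift (h : ℕ → ℝ) (n : ℕ) (X Y : ℝ) :
    ∑ s ∈ Finset.range (n + 1), h s * X ^ (s + 1) * Y ^ (n - s)
      = ∑ s ∈ Finset.range (n + 2), (if 1 ≤ s then h (s - 1) else 0) * X ^ s * Y ^ (n + 1 - s) := by
  symm
  rw [Finset.sum_range_succ']
  simp [Nat.succ_sub_succ]

lemma I1_coef_mid (a b : ℝ) (hb : (-1/2 : ℝ) ≤ b) (r m : ℕ) :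
    (2 * ((r:ℝ)+1+m) + a + b + 2) * (binomR (((r:ℝ)+1+m) + a) m * binomR (((r:ℝ)+1+m) + (b+1)) (r+1))
      = (((r:ℝ)+1+m) + 1) * (binomR (((r:ℝ)+1+m) + 1 + a) (m+1) * binomR (((r:ℝ)+1+m) + 1 + b) (r+1))
        + (((r:ℝ)+1+m) + b + 1) * (binomR (((r:ℝ)+1+m) + a) m * binomR (((r:ℝ)+1+m) + b) (r+1))
        - (((r:ℝ)+1+m) + b + 1) * (binomR (((r:ℝ)+1+m) + a) (m+1) * binomR (((r:ℝ)+1+m) + b) r) := by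
  set N : ℝ := (r:ℝ) + 1 + m with hN
  set p := binomR (N + a) m with hp
  set p' := binomR (N + a) (m+1) with hp'
  set q := binomR (N + b) (r+1) with hq
  set q' := binomR (N + b) r with hq'
  have hPa : binomR (N + 1 + a) (m+1) = p' + p := by
    rw [show N + 1 + a = (N + a) + 1 by ring]; exact binomR_pascal _ _
  have hPb1 : binomR (N + (b+1)) (r+1) = q + q' := by
    rw [show N + (b+1) = (N + b) + 1 by ring]; exact binomR_pascal _ _
  have hPb2 : binomR (N + 1 + b) (r+1) = q + q' := by
    rw [show N + 1 + b = (N + b) + 1 by ring]; exact binomR_pascal _ _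
  have h1 : ((m:ℝ)+1) * p' = (a + r + 1) * p := by
    have := binomR_B1 (N + a) m
    rw [show N + a - m = a + r + 1 by rw [hN]; ring] at this
    exact this
  have h2 : ((r:ℝ)+1) * q = ((m:ℝ) + b + 1) * q' := by
    have := binomR_B1 (N + b) r
    rw [show N + b - r = (m:ℝ) + b + 1 by rw [hN]; ring] at this
    exact this
  have hm1 : ((m:ℝ)+1) ≠ 0 := by positivity
  have hmb : ((m:ℝ)+b+1) ≠ 0 := by
    have : (0:ℝ) ≤ m := Nat.cast_nonneg m
    intro h; linarith
  have hp'e : p' = (a + r + 1) * p / ((m:ℝ)+1) := by field_simp; linarith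
  have hq'e : q' = ((r:ℝ)+1) * q / ((m:ℝ)+b+1) := by field_simp; linarith
  rw [hPa, hPb1, hPb2, hp'e, hq'e]
  field_simp
  ring

lemma I1_coef_zero (a b : ℝ) (n : ℕ) :
    (2 * (n:ℝ) + a + b + 2) * (binomR ((n:ℝ) + a) n * binomR ((n:ℝ) + (b+1)) 0)
      = ((n:ℝ) + 1) * (binomR ((n:ℝ) + 1 + a) (n+1) * binomR ((n:ℝ) + 1 + b) 0)
        + ((n:ℝ) + b + 1) * (binomR ((n:ℝ) + a) n * binomR ((n:ℝ) + b) 0) := by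
  rw [binomR_zero, binomR_zero, binomR_zero]
  have hPa : binomR ((n:ℝ) + 1 + a) (n+1) = binomR ((n:ℝ)+a) (n+1) + binomR ((n:ℝ)+a) n := by
    rw [show (n:ℝ) + 1 + a = ((n:ℝ) + a) + 1 by ring]; exact binomR_pascal _ _
  have hB1 := binomR_B1 ((n:ℝ) + a) n
  linear_combination (-((n:ℝ)+1)) * hPa - hB1

lemma I1_coef_top (a b : ℝ) (n : ℕ) :
    ((n:ℝ) + 1) * (binomR ((n:ℝ) + 1 + a) 0 * binomR ((n:ℝ) + 1 + b) (n+1))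
      = ((n:ℝ) + b + 1) * (binomR ((n:ℝ) + a) 0 * binomR ((n:ℝ) + b) n) := by
  rw [binomR_zero, binomR_zero]
  have hA1 := binomR_A1 ((n:ℝ) + b + 1) n
  rw [show (n:ℝ) + b + 1 - 1 = (n:ℝ) + b by ring] at hA1
  rw [show (n:ℝ) + 1 + b = (n:ℝ) + b + 1 by ring]
  linear_combination hA1

lemma I1_sum (a b : ℝ) (hb : (-1/2 : ℝ) ≤ b) (n : ℕ) (X Y : ℝ) (hYX : Y = X + 1) :
    (2 * (n:ℝ) + a + b + 2) * Y *
        ∑ s ∈ Finset.range (n+1),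
          binomR ((n:ℝ) + a) (n - s) * binomR ((n:ℝ) + (b+1)) s * X ^ s * Y ^ (n - s)
      = ((n:ℝ) + 1) *
          (∑ s ∈ Finset.range (n+2),
            binomR ((n:ℝ) + 1 + a) (n + 1 - s) * binomR ((n:ℝ) + 1 + b) s * X ^ s * Y ^ (n + 1 - s))
        + ((n:ℝ) + b + 1) *
          ∑ s ∈ Finset.range (n+1),
            binomR ((n:ℝ) + a) (n - s) * binomR ((n:ℝ) + b) s * X ^ s * Y ^ (n - s) := by
  subst hYX
  have eL : (2 * (n:ℝ) + a + b + 2) * (X + 1) *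
        ∑ s ∈ Finset.range (n+1),
          binomR ((n:ℝ) + a) (n - s) * binomR ((n:ℝ) + (b+1)) s * X ^ s * (X + 1) ^ (n - s)
      = ∑ s ∈ Finset.range (n+2),
          if s ≤ n then (2 * (n:ℝ) + a + b + 2) *
            (binomR ((n:ℝ) + a) (n - s) * binomR ((n:ℝ) + (b+1)) s) * X ^ s * (X+1) ^ (n + 1 - s)
          else 0 := by
    rw [← sum_ext, Finset.mul_sum]
    refine Finset.sum_congr rfl fun s hs => ?_
    have hsn : s ≤ n := Nat.lt_succ_iff.mp (Finset.mem_range.mp hs)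
    rw [Nat.succ_sub hsn, pow_succ]
    ring
  have eM : ((n:ℝ) + 1) *
        ∑ s ∈ Finset.range (n+2),
          binomR ((n:ℝ) + 1 + a) (n + 1 - s) * binomR ((n:ℝ) + 1 + b) s * X ^ s * (X+1) ^ (n + 1 - s)
      = ∑ s ∈ Finset.range (n+2),
          ((n:ℝ) + 1) * (binomR ((n:ℝ) + 1 + a) (n + 1 - s) * binomR ((n:ℝ) + 1 + b) s)
            * X ^ s * (X+1) ^ (n + 1 - s) := by
    rw [Finset.mul_sum]
    exact Finset.sum_congr rfl fun s hs => by ring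
  have eR : ((n:ℝ) + b + 1) *
        ∑ s ∈ Finset.range (n+1),
          binomR ((n:ℝ) + a) (n - s) * binomR ((n:ℝ) + b) s * X ^ s * (X+1) ^ (n - s)
      = (∑ s ∈ Finset.range (n+2),
          if s ≤ n then ((n:ℝ) + b + 1) *
            (binomR ((n:ℝ) + a) (n - s) * binomR ((n:ℝ) + b) s) * X ^ s * (X+1) ^ (n + 1 - s)
          else 0)
        - ∑ s ∈ Finset.range (n+2),
          (if 1 ≤ s then ((n:ℝ) + b + 1) *
            (binomR ((n:ℝ) + a) (n - (s-1)) * binomR ((n:ℝ) + b) (s-1)) else 0)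
            * X ^ s * (X+1) ^ (n + 1 - s) := by
    rw [← sum_shift (fun s => ((n:ℝ) + b + 1) *
          (binomR ((n:ℝ) + a) (n - s) * binomR ((n:ℝ) + b) s)) n X (X+1),
        ← sum_ext, Finset.mul_sum, ← Finset.sum_sub_distrib]
    refine Finset.sum_congr rfl fun s hs => ?_
    have hsn : s ≤ n := Nat.lt_succ_iff.mp (Finset.mem_range.mp hs)
    rw [Nat.succ_sub hsn, pow_succ, pow_succ]
    ring
  rw [eL, eM, eR, ← Finset.sum_sub_distrib, ← Finset.sum_add_distrib]
  refine Finset.sum_congr rfl fun s hs => ?_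
  have hs2 : s ≤ n + 1 := Nat.lt_succ_iff.mp (Finset.mem_range.mp hs)
  rcases Nat.eq_zero_or_pos s with rfl | hs1
  · rw [if_pos (Nat.zero_le n), if_pos (Nat.zero_le n), if_neg (by omega)]
    simp only [Nat.sub_zero, pow_zero, one_mul, zero_mul, sub_zero]
    linear_combination ((X+1) ^ (n+1)) * I1_coef_zero a b n
  · obtain ⟨r, rfl⟩ : ∃ r, s = r + 1 := ⟨s - 1, by omega⟩
    by_cases hsn : r + 1 ≤ n
    · obtain ⟨m, rfl⟩ : ∃ m, n = r + 1 + m := ⟨n - (r+1), by omega⟩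
      rw [if_pos hsn, if_pos hsn, if_pos (by omega)]
      have e1 : r + 1 + m - (r + 1) = m := by omega
      have e2 : r + 1 + m + 1 - (r + 1) = m + 1 := by omega
      have e3 : r + 1 + m - (r + 1 - 1) = m + 1 := by omega
      have e4 : r + 1 - 1 = r := by omega
      rw [e1, e2, e3, e4]
      have hc := I1_coef_mid a b hb r m
      push_cast
      linear_combination (X ^ (r+1) * (X+1) ^ (m+1)) * hc
    · have hr : r = n := by omega
      subst hr
      rw [if_neg hsn, if_neg hsn, if_pos (by omega)]
      have e1 : r + 1 - (r + 1) = 0 := by omega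
      have e2 : r + 1 - 1 = r := by omega
      have e3 : r - r = 0 := by omega
      rw [e1, e2, e3]
      have hc := I1_coef_top a b r
      push_cast
      linear_combination (- (X ^ (r+1) * (X+1) ^ 0)) * hc

lemma jacobiP_I2 (β : ℝ) (hβ : 0 ≤ β) (n : ℕ) (y : ℝ) :
    (2 * (n:ℝ) + 3) * jacobiP (β+1) (-1/2) (n+1) y
      = jacobiP β (1/2) (n+1) y
        + (2 * (n:ℝ) + 2*β + 5) * ((y+1)/2) * jacobiP (β+1) (3/2) n y := by
  set X := (y - 1) / 2 with hX
  set Y := (y + 1) / 2 with hY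
  unfold jacobiP
  rw [← hX, ← hY]
  have eR : (2 * (n:ℝ) + 2*β + 5) * Y *
        ∑ s ∈ Finset.range (n+1),
          binomR ((n:ℝ) + (β+1)) (n - s) * binomR ((n:ℝ) + 3/2) s * X ^ s * Y ^ (n - s)
      = ∑ s ∈ Finset.range (n+2),
          if s ≤ n then (2 * (n:ℝ) + 2*β + 5) *
            (binomR ((n:ℝ) + (β+1)) (n - s) * binomR ((n:ℝ) + 3/2) s) * X ^ s * Y ^ (n + 1 - s)
          else 0 := by
    rw [← sum_ext, Finset.mul_sum]
    refine Finset.sum_congr rfl fun s hs => ?_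
    have hsn : s ≤ n := Nat.lt_succ_iff.mp (Finset.mem_range.mp hs)
    rw [Nat.succ_sub hsn, pow_succ]
    ring
  rw [eR, Finset.mul_sum, ← Finset.sum_add_distrib]
  refine Finset.sum_congr rfl fun s hs => ?_
  have hs2 : s ≤ n + 1 := Nat.lt_succ_iff.mp (Finset.mem_range.mp hs)
  by_cases hsn : s ≤ n
  · obtain ⟨m, rfl⟩ : ∃ m, n = s + m := ⟨n - s, by omega⟩
    rw [if_pos hsn]
    have e1 : s + m + 1 - s = m + 1 := by omega
    have e2 : s + m - s = m := by omega
    rw [e1, e2]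
    push_cast
    rw [show ((s:ℝ) + (m:ℝ) + 3/2) = (s:ℝ) + (m:ℝ) + 1 + 1/2 by ring,
        show ((s:ℝ) + (m:ℝ) + 1 + β) = (s:ℝ) + (m:ℝ) + (β+1) by ring]
    have hU := binomR_A2 ((s:ℝ) + (m:ℝ) + 1 + (β+1)) (m+1)
    rw [show ((s:ℝ) + (m:ℝ) + 1 + (β+1) - ((m:ℕ)+1 : ℕ)) = β + 1 + (s:ℝ) by push_cast; ring,
        show ((s:ℝ) + (m:ℝ) + 1 + (β+1) - 1) = (s:ℝ) + (m:ℝ) + (β+1) by ring] at hU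
    have hu' := binomR_B1 ((s:ℝ) + (m:ℝ) + (β+1)) m
    rw [show ((s:ℝ) + (m:ℝ) + (β+1) - (m:ℝ)) = β + 1 + (s:ℝ) by ring] at hu'
    have hv := binomR_A2 ((s:ℝ) + (m:ℝ) + 1 + 1/2) s
    rw [show ((s:ℝ) + (m:ℝ) + 1 + 1/2 - (s:ℝ)) = (m:ℝ) + 3/2 by ring,
        show ((s:ℝ) + (m:ℝ) + 1 + 1/2 - 1) = (s:ℝ) + (m:ℝ) + 1 + -1/2 by ring] at hv
    have hd1 : β + 1 + (s:ℝ) ≠ 0 := by have : (0:ℝ) ≤ s := Nat.cast_nonneg s; intro h; linarith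
    have hd2 : (s:ℝ) + (m:ℝ) + 1 + 1/2 ≠ 0 := by
      have h1 : (0:ℝ) ≤ s := Nat.cast_nonneg s; have h2 : (0:ℝ) ≤ m := Nat.cast_nonneg m
      intro h; linarith
    have hUe : binomR ((s:ℝ) + (m:ℝ) + 1 + (β+1)) (m+1)
        = ((s:ℝ) + (m:ℝ) + 1 + (β+1)) * binomR ((s:ℝ) + (m:ℝ) + (β+1)) (m+1) / (β + 1 + (s:ℝ)) := by
      rw [eq_div_iff hd1]; linarith
    have hu'e : binomR ((s:ℝ) + (m:ℝ) + (β+1)) m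
        = ((m:ℝ)+1) * binomR ((s:ℝ) + (m:ℝ) + (β+1)) (m+1) / (β + 1 + (s:ℝ)) := by
      rw [eq_div_iff hd1]; linarith
    have hve : binomR ((s:ℝ) + (m:ℝ) + 1 + -1/2) s
        = ((m:ℝ) + 3/2) * binomR ((s:ℝ) + (m:ℝ) + 1 + 1/2) s / ((s:ℝ) + (m:ℝ) + 1 + 1/2) := by
      rw [eq_div_iff hd2]; linarith
    rw [hUe, hu'e, hve]
    field_simp
    ring
  · have hr : s = n + 1 := by omega
    subst hr
    rw [if_neg hsn]
    have e1 : n + 1 - (n + 1) = 0 := by omega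
    rw [e1, binomR_zero, binomR_zero]
    push_cast
    have hA2 := binomR_A2 ((n:ℝ) + 1 + 1/2) (n+1)
    rw [show ((n:ℝ) + 1 + 1/2 - ((n:ℕ)+1 : ℕ)) = 1/2 by push_cast; ring,
        show ((n:ℝ) + 1 + 1/2 - 1) = (n:ℝ) + 1 + -1/2 by ring] at hA2
    linear_combination (-2 * X^(n+1)) * hA2

lemma deriv_coef (a b : ℝ) (i m : ℕ) :
    ((i:ℝ)+1) * (binomR ((i:ℝ)+(m:ℝ)+1+a) m * binomR ((i:ℝ)+(m:ℝ)+1+b) (i+1))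
      + ((m:ℝ)+1) * (binomR ((i:ℝ)+(m:ℝ)+1+a) (m+1) * binomR ((i:ℝ)+(m:ℝ)+1+b) i)
    = ((i:ℝ)+(m:ℝ)+a+b+2) * (binomR ((i:ℝ)+(m:ℝ)+1+a) m * binomR ((i:ℝ)+(m:ℝ)+1+b) i) := by
  have h1 := binomR_B1 ((i:ℝ)+(m:ℝ)+1+b) i
  have h2 := binomR_B1 ((i:ℝ)+(m:ℝ)+1+a) m
  linear_combination (binomR ((i:ℝ)+(m:ℝ)+1+a) m) * h1 + (binomR ((i:ℝ)+(m:ℝ)+1+b) i) * h2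

lemma jacobiP_hasDerivAt (a b : ℝ) (n : ℕ) (x : ℝ) :
    HasDerivAt (fun x => jacobiP a b (n+1) x)
      (((n:ℝ) + a + b + 2) / 2 * jacobiP (a+1) (b+1) n x) x := by
  have hfun : (fun x => jacobiP a b (n+1) x)
      = fun x => ∑ s ∈ Finset.range (n+2),
          (binomR ((↑(n+1):ℝ) + a) (n+1-s) * binomR ((↑(n+1):ℝ) + b) s) *
            (((x-1)/2) ^ s * ((x+1)/2) ^ (n+1-s)) := by
    funext x; unfold jacobiP
    exact Finset.sum_congr rfl fun s _ => by ring
  rw [hfun]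
  have hX : HasDerivAt (fun x : ℝ => (x-1)/2) (1/2) x := by
    simpa using ((hasDerivAt_id x).sub_const 1).div_const 2
  have hY : HasDerivAt (fun x : ℝ => (x+1)/2) (1/2) x := by
    simpa using ((hasDerivAt_id x).add_const 1).div_const 2
  have hterm : ∀ s ∈ Finset.range (n+2),
      HasDerivAt (fun x => (binomR ((↑(n+1):ℝ) + a) (n+1-s) * binomR ((↑(n+1):ℝ) + b) s) *
            (((x-1)/2) ^ s * ((x+1)/2) ^ (n+1-s)))
        ((binomR ((↑(n+1):ℝ) + a) (n+1-s) * binomR ((↑(n+1):ℝ) + b) s) *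
          (((s:ℝ) * ((x-1)/2) ^ (s-1) * (1/2)) * ((x+1)/2) ^ (n+1-s)
           + ((x-1)/2) ^ s * (((n+1-s : ℕ):ℝ) * ((x+1)/2) ^ (n+1-s-1) * (1/2)))) x := by
    intro s _
    exact ((hX.pow s).mul (hY.pow (n+1-s))).const_mul _
  have hsum := HasDerivAt.fun_sum hterm
  refine hsum.congr_deriv ?_
  symm
  set X := fun x : ℝ => (x-1)/2 with hXd
  have hsplit : ∑ s ∈ Finset.range (n+2),
        (binomR ((↑(n+1):ℝ) + a) (n+1-s) * binomR ((↑(n+1):ℝ) + b) s) *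
          (((s:ℝ) * ((x-1)/2) ^ (s-1) * (1/2)) * ((x+1)/2) ^ (n+1-s)
           + ((x-1)/2) ^ s * (((n+1-s : ℕ):ℝ) * ((x+1)/2) ^ (n+1-s-1) * (1/2)))
      = (∑ s ∈ Finset.range (n+2),
          (binomR ((↑(n+1):ℝ) + a) (n+1-s) * binomR ((↑(n+1):ℝ) + b) s) *
            (((s:ℝ) * ((x-1)/2) ^ (s-1) * (1/2)) * ((x+1)/2) ^ (n+1-s)))
        + ∑ s ∈ Finset.range (n+2),
          (binomR ((↑(n+1):ℝ) + a) (n+1-s) * binomR ((↑(n+1):ℝ) + b) s) *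
            (((x-1)/2) ^ s * (((n+1-s : ℕ):ℝ) * ((x+1)/2) ^ (n+1-s-1) * (1/2))) := by
    rw [← Finset.sum_add_distrib]
    exact Finset.sum_congr rfl fun s _ => by ring
  rw [hsplit]
  have h1 : ∑ s ∈ Finset.range (n+2),
        (binomR ((↑(n+1):ℝ) + a) (n+1-s) * binomR ((↑(n+1):ℝ) + b) s) *
          (((s:ℝ) * ((x-1)/2) ^ (s-1) * (1/2)) * ((x+1)/2) ^ (n+1-s))
      = ∑ i ∈ Finset.range (n+1),
          (binomR ((↑(n+1):ℝ) + a) (n-i) * binomR ((↑(n+1):ℝ) + b) (i+1)) *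
            ((((i:ℝ)+1) * ((x-1)/2) ^ i * (1/2)) * ((x+1)/2) ^ (n+1-(i+1))) := by
    rw [Finset.sum_range_succ']
    simp only [Nat.succ_sub_succ, Nat.add_sub_cancel, Nat.cast_zero, Nat.cast_add, Nat.cast_one,
      zero_mul, mul_zero, zero_add, add_zero, pow_zero]
    norm_num
  have h2 : ∑ s ∈ Finset.range (n+2),
        (binomR ((↑(n+1):ℝ) + a) (n+1-s) * binomR ((↑(n+1):ℝ) + b) s) *
          (((x-1)/2) ^ s * (((n+1-s : ℕ):ℝ) * ((x+1)/2) ^ (n+1-s-1) * (1/2)))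
      = ∑ s ∈ Finset.range (n+1),
          (binomR ((↑(n+1):ℝ) + a) (n+1-s) * binomR ((↑(n+1):ℝ) + b) s) *
            (((x-1)/2) ^ s * (((n+1-s : ℕ):ℝ) * ((x+1)/2) ^ (n+1-s-1) * (1/2))) := by
    rw [Finset.sum_range_succ]
    simp
  rw [h1, h2, ← Finset.sum_add_distrib]
  unfold jacobiP
  rw [Finset.mul_sum]
  refine Finset.sum_congr rfl fun i hi => ?_
  have hin : i ≤ n := Nat.lt_succ_iff.mp (Finset.mem_range.mp hi)
  obtain ⟨m, rfl⟩ : ∃ m, n = i + m := ⟨n - i, by omega⟩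
  have e1 : i + m - i = m := by omega
  have e2 : i + m + 1 - (i + 1) = m := by omega
  have e3 : i + m + 1 - i = m + 1 := by omega
  have e5 : m + 1 - 1 = m := by omega
  rw [e1, e2, e3, e5]
  have hc := deriv_coef a b i m
  push_cast
  rw [show ((i:ℝ)+(m:ℝ)+(a+1)) = (i:ℝ)+(m:ℝ)+1+a by ring,
      show ((i:ℝ)+(m:ℝ)+(b+1)) = (i:ℝ)+(m:ℝ)+1+b by ring]
  linear_combination (-(((x-1)/2)^i * ((x+1)/2)^m * (1/2))) * hc

lemma binomR_one (z : ℝ) : binomR z 1 = z := by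
  unfold binomR; simp

lemma jacobiP_deg_one (a b x : ℝ) :
    jacobiP a b 1 x = (1+a) * ((x+1)/2) + (1+b) * ((x-1)/2) := by
  unfold jacobiP
  rw [Finset.sum_range_succ, Finset.sum_range_succ, Finset.sum_range_zero]
  norm_num [binomR_zero, binomR_one]

lemma eq_of_hasDerivAt_eq {F G F' G' : ℝ → ℝ}
    (hF : ∀ x, HasDerivAt F (F' x) x) (hG : ∀ x, HasDerivAt G (G' x) x)
    (heq : ∀ x, F' x = G' x) (h1 : F 1 = G 1) : ∀ x, F x = G x := by
  intro x
  have hdiff : Differentiable ℝ (fun y => F y - G y) :=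
    fun y => ((hF y).sub (hG y)).differentiableAt
  have hd : ∀ y, deriv (fun y => F y - G y) y = 0 := by
    intro y
    have h := (hF y).sub (hG y)
    rw [heq y] at h
    simpa using (show HasDerivAt (fun y => F y - G y) _ y from h).deriv
  have := is_const_of_deriv_eq_zero hdiff hd x 1
  have h2 : F x - G x = F 1 - G 1 := this
  linarith

lemma inner_hasDerivAt (x : ℝ) : HasDerivAt (fun x : ℝ => 2*x^2 - 1) (4*x) x := by
  have h := ((hasDerivAt_pow 2 x).const_mul (2:ℝ)).sub_const 1
  simpa using h.congr_deriv (by ring)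

lemma quadEO (n : ℕ) : ∀ α : ℝ, 0 < α →
    (∀ x : ℝ, binomR ((n:ℝ)+α) n * jacobiP α α (2*n) x
        = binomR (2*(n:ℝ)+α) (2*n) * jacobiP α (-1/2) n (2*x^2-1))
  ∧ (∀ x : ℝ, binomR ((n:ℝ)+α) n * jacobiP α α (2*n+1) x
        = binomR (2*(n:ℝ)+1+α) (2*n+1) * (x * jacobiP α (1/2) n (2*x^2-1))) := by
  induction n with
  | zero =>
    intro α hα
    constructor
    · intro x
      norm_num [jacobiP_zero, binomR_zero]
    · intro x
      norm_num [jacobiP_zero, binomR_zero, binomR_one, jacobiP_deg_one]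
      ring
  | succ n ih =>
    have hE : ∀ α : ℝ, 0 < α → ∀ x : ℝ, binomR ((↑(n+1):ℝ)+α) (n+1) * jacobiP α α (2*(n+1)) x
        = binomR (2*(↑(n+1):ℝ)+α) (2*(n+1)) * jacobiP α (-1/2) (n+1) (2*x^2-1) := by
      intro α hα
      have hB0pos : 0 < binomR ((n:ℝ)+(α+1)) n := binomR_pos _ _ (by push_cast; linarith)
      refine eq_of_hasDerivAt_eq
        (F' := fun x => binomR ((↑(n+1):ℝ)+α) (n+1) *
          (((↑(2*n+1):ℝ)+α+α+2)/2 * jacobiP (α+1) (α+1) (2*n+1) x))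
        (G' := fun x => binomR (2*(↑(n+1):ℝ)+α) (2*(n+1)) *
          ((((n:ℝ)+α+(-1/2)+2)/2 * jacobiP (α+1) (-1/2+1) n (2*x^2-1)) * (4*x)))
        ?_ ?_ ?_ ?_
      · intro x
        have h := (jacobiP_hasDerivAt α α (2*n+1) x).const_mul (binomR ((↑(n+1):ℝ)+α) (n+1))
        rw [show 2*n+1+1 = 2*(n+1) by ring] at h
        exact h
      · intro x
        have h := ((jacobiP_hasDerivAt α (-1/2) n (2*x^2-1)).comp x (inner_hasDerivAt x)).const_mul
          (binomR (2*(↑(n+1):ℝ)+α) (2*(n+1)))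
        exact h
      · intro x
        have hO := (ih (α+1) (by linarith)).2 x
        rw [show (-1/2+1 : ℝ) = 1/2 by norm_num]
        have hP : jacobiP (α+1) (α+1) (2*n+1) x
            = binomR (2*(n:ℝ)+1+(α+1)) (2*n+1) * (x * jacobiP (α+1) (1/2) n (2*x^2-1))
              / binomR ((n:ℝ)+(α+1)) n := by
          rw [eq_div_iff (ne_of_gt hB0pos)]; linarith [hO]
        have hB := binomR_B1 ((↑(n+1):ℝ)+α) n
        rw [show ((↑(n+1):ℝ)+α-(n:ℝ)) = α+1 by push_cast; ring,
            show (binomR ((↑(n+1):ℝ)+α) n) = binomR ((n:ℝ)+(α+1)) n by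
              rw [show ((↑(n+1):ℝ)+α) = (n:ℝ)+(α+1) by push_cast; ring]] at hB
        have hC := binomR_B1 (2*(↑(n+1):ℝ)+α) (2*n+1)
        rw [show 2*n+1+1 = 2*(n+1) by ring,
            show ((↑(2*n+1):ℝ)+1) = 2*(n:ℝ)+2 by push_cast; ring,
            show (2*(↑(n+1):ℝ)+α-(↑(2*n+1):ℝ)) = α+1 by push_cast; ring,
            show (binomR (2*(↑(n+1):ℝ)+α) (2*n+1)) = binomR (2*(n:ℝ)+1+(α+1)) (2*n+1) by
              rw [show (2*(↑(n+1):ℝ)+α) = 2*(n:ℝ)+1+(α+1) by push_cast; ring]] at hC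
        rw [hP]
        have hn1 : ((n:ℝ)+1) ≠ 0 := by positivity
        have hn2 : (2*(n:ℝ)+2) ≠ 0 := by positivity
        have hBe : binomR ((↑(n+1):ℝ)+α) (n+1)
            = (α+1) * binomR ((n:ℝ)+(α+1)) n / ((n:ℝ)+1) := by
          rw [eq_div_iff hn1]
          push_cast at hB ⊢
          linarith [hB]
        have hCe : binomR (2*(↑(n+1):ℝ)+α) (2*(n+1))
            = (α+1) * binomR (2*(n:ℝ)+1+(α+1)) (2*n+1) / (2*(n:ℝ)+2) := by
          rw [eq_div_iff hn2]
          push_cast at hC ⊢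
          linarith [hC]
        rw [hBe, hCe]
        push_cast
        field_simp
        ring
      · rw [jacobiP_one, show 2*(1:ℝ)^2-1 = 1 by norm_num, jacobiP_one,
            show ((↑(2*(n+1)):ℝ)+α) = 2*(↑(n+1):ℝ)+α by push_cast; ring]
        ring
    intro α hα
    refine ⟨hE α hα, ?_⟩
    have hB2pos : 0 < binomR ((↑(n+1):ℝ)+(α+1)) (n+1) :=
      binomR_pos _ _ (by push_cast; linarith)
    refine eq_of_hasDerivAt_eq
      (F' := fun x => binomR ((↑(n+1):ℝ)+α) (n+1) *
        (((↑(2*(n+1)):ℝ)+α+α+2)/2 * jacobiP (α+1) (α+1) (2*(n+1)) x))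
      (G' := fun x => binomR (2*(↑(n+1):ℝ)+1+α) (2*(n+1)+1) *
        (1 * jacobiP α (1/2) (n+1) (2*x^2-1)
          + x * ((((n:ℝ)+α+1/2+2)/2 * jacobiP (α+1) (1/2+1) n (2*x^2-1)) * (4*x))))
      ?_ ?_ ?_ ?_
    · intro x
      exact (jacobiP_hasDerivAt α α (2*(n+1)) x).const_mul _
    · intro x
      have hJ2 := (jacobiP_hasDerivAt α (1/2) n (2*x^2-1)).comp x (inner_hasDerivAt x)
      have h := ((hasDerivAt_id x).mul hJ2).const_mul (binomR (2*(↑(n+1):ℝ)+1+α) (2*(n+1)+1))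
      simpa using h
    · intro x
      rw [show (1/2+1 : ℝ) = 3/2 by norm_num]
      have hEa := hE (α+1) (by linarith) x
      have hI2 := jacobiP_I2 α (le_of_lt hα) n (2*x^2-1)
      rw [show ((2*x^2-1+1)/2 : ℝ) = x^2 by ring] at hI2
      have hP22 : jacobiP (α+1) (α+1) (2*(n+1)) x
          = binomR (2*(↑(n+1):ℝ)+(α+1)) (2*(n+1)) * jacobiP (α+1) (-1/2) (n+1) (2*x^2-1)
            / binomR ((↑(n+1):ℝ)+(α+1)) (n+1) := by
        rw [eq_div_iff (ne_of_gt hB2pos)]; linarith [hEa]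
      have hJ2e : jacobiP α (1/2) (n+1) (2*x^2-1)
          = (2*(n:ℝ)+3) * jacobiP (α+1) (-1/2) (n+1) (2*x^2-1)
            - (2*(n:ℝ)+2*α+5) * x^2 * jacobiP (α+1) (3/2) n (2*x^2-1) := by
        linarith [hI2]
      have hBrel := binomR_A2 ((↑(n+1):ℝ)+(α+1)) (n+1)
      rw [show ((↑(n+1):ℝ)+(α+1)-(↑(n+1):ℝ)) = α+1 by ring,
          show ((↑(n+1):ℝ)+(α+1)-1) = (↑(n+1):ℝ)+α by ring] at hBrel
      have hCrel := binomR_B1 (2*(↑(n+1):ℝ)+1+α) (2*(n+1))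
      rw [show 2*(n+1)+1 = 2*(n+1)+1 by rfl,
          show ((↑(2*(n+1)):ℝ)+1) = 2*(n:ℝ)+3 by push_cast; ring,
          show (2*(↑(n+1):ℝ)+1+α-(↑(2*(n+1)):ℝ)) = α+1 by push_cast; ring,
          show (binomR (2*(↑(n+1):ℝ)+1+α) (2*(n+1))) = binomR (2*(↑(n+1):ℝ)+(α+1)) (2*(n+1)) by
            rw [show (2*(↑(n+1):ℝ)+1+α) = 2*(↑(n+1):ℝ)+(α+1) by ring]] at hCrel
      have hd1 : ((↑(n+1):ℝ)+(α+1)) ≠ 0 := by positivity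
      have hd2 : (2*(n:ℝ)+3) ≠ 0 := by positivity
      have hBe : binomR ((↑(n+1):ℝ)+α) (n+1)
          = (α+1) * binomR ((↑(n+1):ℝ)+(α+1)) (n+1) / ((↑(n+1):ℝ)+(α+1)) := by
        rw [eq_div_iff hd1]; linarith [hBrel]
      have hCe : binomR (2*(↑(n+1):ℝ)+1+α) (2*(n+1)+1)
          = (α+1) * binomR (2*(↑(n+1):ℝ)+(α+1)) (2*(n+1)) / (2*(n:ℝ)+3) := by
        rw [eq_div_iff hd2]; linarith [hCrel]
      rw [hP22, hJ2e, hBe, hCe]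
      have hB2ne : binomR ((↑(n+1):ℝ)+(α+1)) (n+1) ≠ 0 := ne_of_gt hB2pos
      push_cast at hB2ne hd1 ⊢
      field_simp
      ring
    · rw [jacobiP_one, show 2*(1:ℝ)^2-1 = 1 by norm_num, jacobiP_one,
          show ((↑(2*(n+1)+1):ℝ)+α) = 2*(↑(n+1):ℝ)+1+α by push_cast; ring]
      ring

lemma jacobiP_I1W (a b : ℝ) (hb : (-1/2 : ℝ) ≤ b) (n : ℕ) (x : ℝ) :
    (2 * (n:ℝ) + a + b + 2) * ((x + 1) / 2) * jacobiP a (b + 1) n x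
      = ((n:ℝ) + 1) * jacobiP a b (n + 1) x + ((n:ℝ) + b + 1) * jacobiP a b n x := by
  have h := I1_sum a b hb n ((x-1)/2) ((x+1)/2) (by ring)
  unfold jacobiP
  push_cast
  exact h


lemma stepC (α : ℝ) (hα : 0 < α) (n : ℕ) :
    ∀ k : ℕ, (k:ℝ) ≤ α + 1/2 →
    ∃ c : ℕ → ℝ, (∀ j, 0 ≤ c j) ∧ ∀ x : ℝ,
      ((x+1)/2)^k * jacobiP α α n x
        = ∑ j ∈ Finset.Icc n (n+k), c j * jacobiP α (α - k) j x := by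
  intro k
  induction k with
  | zero =>
    intro _
    refine ⟨fun j => if j = n then 1 else 0, fun j => by positivity, fun x => ?_⟩
    rw [show n + 0 = n from rfl, Finset.Icc_self, Finset.sum_singleton]
    dsimp only
    rw [if_pos rfl]
    norm_num
  | succ k ihk =>
    intro hk1
    have hk : (k:ℝ) ≤ α + 1/2 := by push_cast at hk1 ⊢; linarith
    obtain ⟨c, hc0, hc⟩ := ihk hk
    set b : ℝ := α - (k+1 : ℕ) with hbdef
    have hb : (-1/2 : ℝ) ≤ b := by rw [hbdef]; push_cast at hk1 ⊢; linarith
    have hb1 : b + 1 = α - (k : ℕ) := by rw [hbdef]; push_cast; ring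
    have hDpos : ∀ j : ℕ, (0:ℝ) < 2 * (j:ℝ) + α + b + 2 := by
      intro j
      have : (0:ℝ) ≤ j := Nat.cast_nonneg j
      rw [hbdef]; push_cast at hk1 ⊢; linarith
    set A : ℕ → ℝ := fun j => ((j:ℝ) + b + 1) / (2 * (j:ℝ) + α + b + 2) with hAdef
    set B : ℕ → ℝ := fun j => ((j:ℝ) + 1) / (2 * (j:ℝ) + α + b + 2) with hBdef
    have hApos : ∀ j : ℕ, 0 ≤ A j := by
      intro j
      have h1 : (0:ℝ) ≤ j := Nat.cast_nonneg j
      have h2 : (0:ℝ) ≤ (j:ℝ) + b + 1 := by rw [hbdef]; push_cast at hk1 ⊢; linarith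
      exact div_nonneg h2 (le_of_lt (hDpos j))
    have hBpos : ∀ j : ℕ, 0 ≤ B j := by
      intro j
      have h1 : (0:ℝ) ≤ j := Nat.cast_nonneg j
      exact div_nonneg (by linarith) (le_of_lt (hDpos j))
    refine ⟨fun j => (if j ≤ n+k then c j * A j else 0)
        + (if n+1 ≤ j then c (j-1) * B (j-1) else 0), ?_, ?_⟩
    · intro j
      have h1 : 0 ≤ c j * A j := mul_nonneg (hc0 j) (hApos j)
      have h2 : 0 ≤ c (j-1) * B (j-1) := mul_nonneg (hc0 _) (hBpos _)
      positivity
    · intro x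
      have key : ∀ j : ℕ, ((x+1)/2) * jacobiP α (α - (k:ℕ)) j x
          = B j * jacobiP α b (j+1) x + A j * jacobiP α b j x := by
        intro j
        have hI := jacobiP_I1W α b hb j x
        rw [hb1] at hI
        rw [hAdef, hBdef]
        dsimp only
        have hD := hDpos j
        rw [div_mul_eq_mul_div, div_mul_eq_mul_div, div_mul_eq_mul_div, ← add_div,
          div_eq_div_iff (by norm_num : (2:ℝ) ≠ 0) (ne_of_gt hD)]
        linear_combination 2 * hI
      have hmap : (Finset.Icc n (n+k)).map (addRightEmbedding 1) = Finset.Icc (n+1) (n+k+1) := by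
        rw [Finset.map_add_right_Icc]
      calc ((x+1)/2)^(k+1) * jacobiP α α n x
          = ((x+1)/2) * (((x+1)/2)^k * jacobiP α α n x) := by ring
        _ = ((x+1)/2) * ∑ j ∈ Finset.Icc n (n+k), c j * jacobiP α (α - (k:ℕ)) j x := by
            rw [hc x]
        _ = ∑ j ∈ Finset.Icc n (n+k),
              (c j * A j * jacobiP α b j x + c j * B j * jacobiP α b (j+1) x) := by
            rw [Finset.mul_sum]
            refine Finset.sum_congr rfl fun j hj => ?_
            have hkey := key j
            calc ((x+1)/2) * (c j * jacobiP α (α - (k:ℕ)) j x)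
                = c j * (((x+1)/2) * jacobiP α (α - (k:ℕ)) j x) := by ring
              _ = c j * (B j * jacobiP α b (j+1) x + A j * jacobiP α b j x) := by rw [hkey]
              _ = c j * A j * jacobiP α b j x + c j * B j * jacobiP α b (j+1) x := by ring
        _ = (∑ j ∈ Finset.Icc n (n+k), c j * A j * jacobiP α b j x)
            + ∑ j ∈ Finset.Icc n (n+k), c j * B j * jacobiP α b (j+1) x := by
            rw [Finset.sum_add_distrib]
        _ = (∑ j ∈ Finset.Icc n (n+k+1), (if j ≤ n+k then c j * A j else 0) * jacobiP α b j x)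
            + ∑ j ∈ Finset.Icc n (n+k+1),
                (if n+1 ≤ j then c (j-1) * B (j-1) else 0) * jacobiP α b j x := by
            congr 1
            · calc ∑ j ∈ Finset.Icc n (n+k), c j * A j * jacobiP α b j x
                  = ∑ j ∈ Finset.Icc n (n+k),
                      (if j ≤ n+k then c j * A j else 0) * jacobiP α b j x :=
                    Finset.sum_congr rfl fun j hj => by
                      rw [if_pos (Finset.mem_Icc.mp hj).2]
                _ = ∑ j ∈ Finset.Icc n (n+k+1),
                      (if j ≤ n+k then c j * A j else 0) * jacobiP α b j x := by
                    refine Finset.sum_subset (Finset.Icc_subset_Icc_right (by omega)) ?_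
                    intro j hj hnj
                    rw [if_neg, zero_mul]
                    intro hcon
                    exact hnj (Finset.mem_Icc.mpr ⟨(Finset.mem_Icc.mp hj).1, hcon⟩)
            · calc ∑ j ∈ Finset.Icc n (n+k), c j * B j * jacobiP α b (j+1) x
                  = ∑ j ∈ Finset.Icc (n+1) (n+k+1),
                      (if n+1 ≤ j then c (j-1) * B (j-1) else 0) * jacobiP α b j x := by
                    rw [← hmap, Finset.sum_map]
                    refine Finset.sum_congr rfl fun j hj => ?_
                    have hjm := Finset.mem_Icc.mp hj
                    simp only [addRightEmbedding_apply]
                    rw [if_pos (by omega), Nat.add_sub_cancel]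
                _ = ∑ j ∈ Finset.Icc n (n+k+1),
                      (if n+1 ≤ j then c (j-1) * B (j-1) else 0) * jacobiP α b j x := by
                    refine Finset.sum_subset (Finset.Icc_subset_Icc (by omega) (by omega)) ?_
                    intro j hj hnj
                    rw [if_neg, zero_mul]
                    intro hcon
                    exact hnj (Finset.mem_Icc.mpr ⟨hcon, (Finset.mem_Icc.mp hj).2⟩)
        _ = ∑ j ∈ Finset.Icc n (n+(k+1)),
              ((if j ≤ n+k then c j * A j else 0)
                + (if n+1 ≤ j then c (j-1) * B (j-1) else 0)) * jacobiP α b j x := by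
            rw [← Finset.sum_add_distrib]
            exact Finset.sum_congr rfl fun j hj => by ring

theorem stmt6 (lam : ℕ) (hlam : 1 ≤ lam) (n : ℕ) :
    ∃ a : ℕ → ℝ, (∀ j, 0 ≤ a j) ∧
      ∀ t ∈ Set.Icc (0 : ℝ) Real.pi,
        gegenR lam n (Real.cos t) * Real.cos (t / 2) ^ (2 * lam) =
          ∑ j ∈ Finset.Icc n (n + lam), a j * gegenR lam (2 * j) (Real.cos (t / 2)) := by
  have hlamR : (1:ℝ) ≤ (lam:ℝ) := by exact_mod_cast hlam
  have hA : 0 < (lam:ℝ) - 1/2 := by linarith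
  have hkcond : ((lam:ℕ):ℝ) ≤ ((lam:ℝ) - 1/2) + 1/2 := by norm_num
  obtain ⟨c, hc0, hc⟩ := stepC ((lam:ℝ) - 1/2) hA n lam hkcond
  have hNpos : ∀ m : ℕ, (0:ℝ) < binomR ((m:ℝ) + ((lam:ℝ) - 1/2)) m := by
    intro m
    apply binomR_pos
    linarith
  refine ⟨fun j => c j * binomR ((j:ℝ) + ((lam:ℝ) - 1/2)) j
      / binomR ((n:ℝ) + ((lam:ℝ) - 1/2)) n, ?_, ?_⟩
  · intro j
    exact div_nonneg (mul_nonneg (hc0 j) (le_of_lt (hNpos j))) (le_of_lt (hNpos n))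
  · intro t _
    have hcos : Real.cos t = 2 * (Real.cos (t/2))^2 - 1 := by
      conv_lhs => rw [show t = 2*(t/2) by ring]
      rw [Real.cos_two_mul]
    set u : ℝ := Real.cos (t/2) with hu
    unfold gegenR
    simp only [jacobiP_one]
    rw [hcos]
    have h1 := hc (2*u^2-1)
    rw [show ((2*u^2-1+1)/2 : ℝ) = u^2 by ring,
        show ((lam:ℝ) - 1/2 - ((lam:ℕ):ℝ)) = -1/2 by push_cast; ring] at h1
    rw [div_mul_eq_mul_div, div_eq_iff (ne_of_gt (hNpos n)), Finset.sum_mul]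
    calc jacobiP ((lam:ℝ) - 1/2) ((lam:ℝ) - 1/2) n (2*u^2-1) * u^(2*lam)
        = (u^2)^lam * jacobiP ((lam:ℝ) - 1/2) ((lam:ℝ) - 1/2) n (2*u^2-1) := by
          rw [← pow_mul]; ring
      _ = ∑ j ∈ Finset.Icc n (n+lam),
            c j * jacobiP ((lam:ℝ) - 1/2) (-1/2) j (2*u^2-1) := h1
      _ = ∑ j ∈ Finset.Icc n (n+lam),
            c j * binomR ((j:ℝ) + ((lam:ℝ) - 1/2)) j
              / binomR ((n:ℝ) + ((lam:ℝ) - 1/2)) n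
              * (jacobiP ((lam:ℝ) - 1/2) ((lam:ℝ) - 1/2) (2*j) u
                  / binomR ((↑(2*j):ℝ) + ((lam:ℝ) - 1/2)) (2*j))
              * binomR ((n:ℝ) + ((lam:ℝ) - 1/2)) n := by
          refine Finset.sum_congr rfl fun j hj => ?_
          have hQ := (quadEO j ((lam:ℝ) - 1/2) hA).1 u
          have hD1 : (0:ℝ) < binomR (2*(j:ℝ) + ((lam:ℝ) - 1/2)) (2*j) := by
            apply binomR_pos
            push_cast
            linarith
          rw [show ((↑(2*j):ℝ) + ((lam:ℝ) - 1/2)) = 2*(j:ℝ) + ((lam:ℝ) - 1/2) by push_cast; ring]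
          have hDe := ne_of_gt hD1
          have hNe := ne_of_gt (hNpos n)
          have hQs : jacobiP ((lam:ℝ) - 1/2) (-1/2) j (2*u^2-1)
              = binomR ((j:ℝ) + ((lam:ℝ) - 1/2)) j
                  * jacobiP ((lam:ℝ) - 1/2) ((lam:ℝ) - 1/2) (2*j) u
                  / binomR (2*(j:ℝ) + ((lam:ℝ) - 1/2)) (2*j) := by
            rw [eq_div_iff hDe]; linarith [hQ]
          rw [hQs, div_mul_div_comm, div_mul_eq_mul_div, ← mul_div_assoc,
            div_eq_div_iff hDe (mul_ne_zero hNe hDe)]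
          ring
end

section
/- Define α_ℓ^{(0)} = (2λ-1)(2λ-3)⋯(2λ-2ℓ+1) and α_ℓ^{(1)} recursively by α_1^{(1)} = 1, α_{ℓ+1}^{(1)} = α_ℓ^{(0)} + 2(λ-ℓ) α_ℓ^{(1)}. Then α_λ^{(1)} + α_λ^{(0)} = 2^λ λ!. -/
lemma prod_sub_eq_factorial (n : ℕ) :
    (∏ i ∈ Finset.range n, ((n : ℝ) - i)) = Nat.factorial n := by
  have h : (∏ i ∈ Finset.range n, ((n : ℝ) - i)) =
      ∏ i ∈ Finset.range n, ((n - i : ℕ) : ℝ) := by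
    apply Finset.prod_congr rfl
    intro i hi
    have : i ≤ n := le_of_lt (Finset.mem_range.mp hi)
    push_cast [Nat.cast_sub this]
    ring
  rw [h, ← Nat.cast_prod]
  congr 1
  rw [← Finset.prod_range_add_one_eq_factorial,
    ← Finset.prod_range_reflect (fun i => i + 1) n]
  apply Finset.prod_congr rfl
  intro i hi
  have : i < n := Finset.mem_range.mp hi
  omega

theorem stmt11 (lam : ℕ) (hlam : 1 ≤ lam) (a0 a1 : ℕ → ℝ)
    (ha0 : ∀ ℓ, a0 ℓ = ∏ i ∈ Finset.range ℓ, (2 * (lam : ℝ) - 2 * i - 1))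
    (ha1 : a1 1 = 1)
    (hrec : ∀ ℓ, 1 ≤ ℓ → ℓ < lam → a1 (ℓ + 1) = a0 ℓ + 2 * ((lam : ℝ) - ℓ) * a1 ℓ) :
    a1 lam + a0 lam = 2 ^ lam * (Nat.factorial lam : ℝ) := by
  have key : ∀ ℓ, 1 ≤ ℓ → ℓ ≤ lam →
      a1 ℓ + a0 ℓ = 2 ^ ℓ * ∏ i ∈ Finset.range ℓ, ((lam : ℝ) - i) := by
    intro ℓ
    induction ℓ with
    | zero => omega
    | succ m ih =>
        intro _ hle
        rcases Nat.eq_or_lt_of_le (Nat.one_le_iff_ne_zero.mpr (Nat.succ_ne_zero m)) with h1 | h1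
        · -- m = 0
          have hm : m = 0 := by omega
          subst hm
          rw [ha1, ha0]
          simp
        · -- m ≥ 1
          have hm1 : 1 ≤ m := by omega
          have hmlt : m < lam := by omega
          have hIH := ih hm1 (le_of_lt hmlt)
          rw [hrec m hm1 hmlt, ha0 (m+1), Finset.prod_range_succ, ← ha0 m,
            Finset.prod_range_succ]
          have : a0 m + 2 * ((lam : ℝ) - m) * a1 m + a0 m * (2 * lam - 2 * m - 1)
              = 2 * ((lam : ℝ) - m) * (a1 m + a0 m) := by ring
          rw [this, hIH]
          ring
  have := key lam hlam le_rfl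
  rw [this, prod_sub_eq_factorial]
end

section
/- For every natural number m ≥ 1: 1 − (1/π)(Γ(m+1/2)/Γ(m+1))² = (2/π) Σ_{j=1}^{m} (Γ(m-j+1/2)Γ(m+j+1/2))/(Γ(m-j+1)Γ(m+j+1)). -/
open Finset Nat

private def S (n : ℕ) : ℕ := ∑ k ∈ range (n + 1), centralBinom k * centralBinom (n - k)

private def A (n : ℕ) : ℕ := ∑ k ∈ range (n + 1), k * (centralBinom k * centralBinom (n - k))

private lemma two_A (n : ℕ) : 2 * A n = n * S n := by
  have h : A n = ∑ k ∈ range (n + 1),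
      (n - k) * (centralBinom (n - k) * centralBinom k) := by
    rw [A, ← Finset.sum_range_reflect (fun k => k * (centralBinom k * centralBinom (n - k))) (n+1)]
    refine Finset.sum_congr rfl fun k hk => ?_
    have hk' : k ≤ n := by simpa [Nat.lt_succ_iff] using Finset.mem_range.mp hk
    simp only [Nat.add_sub_cancel]
    rw [Nat.sub_sub_self hk']
  rw [two_mul]
  nth_rewrite 1 [h]
  rw [A, S, Finset.mul_sum, ← Finset.sum_add_distrib]
  refine Finset.sum_congr rfl fun k hk => ?_
  have hk' : k ≤ n := by simpa [Nat.lt_succ_iff] using Finset.mem_range.mp hk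
  have hnk : (n - k) + k = n := Nat.sub_add_cancel hk'
  have h2 : (n - k) * (centralBinom (n - k) * centralBinom k)
      + k * (centralBinom k * centralBinom (n - k))
      = ((n - k) + k) * (centralBinom k * centralBinom (n - k)) := by ring
  rw [h2, hnk]

private lemma A_succ (n : ℕ) : A (n + 1) = 4 * A n + 2 * S n := by
  rw [A, Finset.sum_range_succ']
  simp only [Nat.zero_mul, add_zero, Nat.add_sub_cancel_left]
  have h : ∀ j, (j + 1) * (centralBinom (j + 1) * centralBinom (n + 1 - (j + 1)))
      = 2 * (2 * j + 1) * (centralBinom j * centralBinom (n - j)) := by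
    intro j
    have : n + 1 - (j + 1) = n - j := by omega
    rw [this, ← mul_assoc, succ_mul_centralBinom_succ, mul_assoc]
  simp only [h]
  rw [A, S, Finset.mul_sum, Finset.mul_sum, ← Finset.sum_add_distrib]
  refine Finset.sum_congr rfl fun k _ => ?_
  ring

private lemma S_eq (n : ℕ) : S n = 4 ^ n := by
  induction n with
  | zero => simp [S, centralBinom]
  | succ n ih =>
    have h1 : 2 * A (n + 1) = (n + 1) * S (n + 1) := two_A (n + 1)
    have h2 : 2 * A n = n * S n := two_A n
    have h3 : A (n + 1) = 4 * A n + 2 * S n := A_succ n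
    have : (n + 1) * S (n + 1) = (n + 1) * (4 * S n) := by
      have : 2 * A (n + 1) = 4 * (2 * A n) + 4 * S n := by rw [h3]; ring
      rw [h1, h2] at this
      rw [this]; ring
    have h4 : S (n + 1) = 4 * S n := Nat.eq_of_mul_eq_mul_left (Nat.succ_pos n) this
    rw [h4, ih, pow_succ]; ring

private lemma split_sum (m : ℕ) :
    S (2 * m) = centralBinom m * centralBinom m
      + 2 * ∑ k ∈ range m, centralBinom k * centralBinom (2 * m - k) := by
  have key : ∑ k ∈ range (2 * m + 1), centralBinom k * centralBinom (2 * m - k)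
      = (∑ k ∈ range (m + 1), centralBinom k * centralBinom (2 * m - k))
        + ∑ i ∈ range m, centralBinom (m + 1 + i) * centralBinom (2 * m - (m + 1 + i)) := by
    have h : 2 * m + 1 = (m + 1) + m := by omega
    rw [h, Finset.sum_range_add]
  have h2 : ∑ i ∈ range m, centralBinom (m + 1 + i) * centralBinom (2 * m - (m + 1 + i))
      = ∑ k ∈ range m, centralBinom k * centralBinom (2 * m - k) := by
    rw [← Finset.sum_range_reflect
      (fun i => centralBinom (m + 1 + i) * centralBinom (2 * m - (m + 1 + i))) m]
    refine Finset.sum_congr rfl fun k hk => ?_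
    have hk' : k < m := Finset.mem_range.mp hk
    have e1 : m + 1 + (m - 1 - k) = 2 * m - k := by omega
    rw [e1]
    have e2 : 2 * m - (2 * m - k) = k := by omega
    rw [e2, mul_comm]
  rw [S, key, h2, Finset.sum_range_succ]
  have e3 : 2 * m - m = m := by omega
  rw [e3]; ring

private lemma Gamma_nat_half (k : ℕ) :
    Real.Gamma ((k : ℝ) + 1 / 2) = Real.sqrt Real.pi * centralBinom k * k ! / 4 ^ k := by
  induction k with
  | zero =>
    simp only [Nat.cast_zero, zero_add, Nat.centralBinom_zero, Nat.factorial_zero,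
      Nat.cast_one, pow_zero, mul_one, div_one]
    exact Real.Gamma_one_half_eq
  | succ k ih =>
    have h : ((k : ℝ) + 1) + 1 / 2 = ((k : ℝ) + 1 / 2) + 1 := by ring
    rw [Nat.cast_succ, h, Real.Gamma_add_one (by positivity), ih]
    have hc : ((k + 1 : ℕ) : ℝ) * centralBinom (k + 1) = 2 * (2 * k + 1) * centralBinom k := by
      exact_mod_cast congrArg (Nat.cast : ℕ → ℝ) (succ_mul_centralBinom_succ k)
    rw [Nat.factorial_succ]
    push_cast at hc ⊢
    field_simp
    linear_combination (-(2 * 4 ^ k : ℝ)) * hc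

theorem stmt13 (m : ℕ) (hm : 1 ≤ m) :
    1 - (1 / Real.pi) * (Real.Gamma ((m : ℝ) + 1 / 2) / Real.Gamma ((m : ℝ) + 1)) ^ 2 =
      (2 / Real.pi) * ∑ j ∈ Finset.Icc 1 m,
        (Real.Gamma ((m : ℝ) - j + 1 / 2) * Real.Gamma ((m : ℝ) + j + 1 / 2)) /
          (Real.Gamma ((m : ℝ) - j + 1) * Real.Gamma ((m : ℝ) + j + 1)) := by
  have hπ := Real.pi_pos
  have hsq : Real.sqrt Real.pi ^ 2 = Real.pi := Real.sq_sqrt hπ.le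
  have hs0 : Real.sqrt Real.pi ≠ 0 := by positivity
  have hterm : ∀ j ∈ Finset.Icc 1 m,
      (Real.Gamma ((m : ℝ) - j + 1 / 2) * Real.Gamma ((m : ℝ) + j + 1 / 2)) /
          (Real.Gamma ((m : ℝ) - j + 1) * Real.Gamma ((m : ℝ) + j + 1))
      = Real.pi * (centralBinom (m - j) * centralBinom (m + j)) / 4 ^ (2 * m) := by
    intro j hj
    obtain ⟨hj1, hj2⟩ := Finset.mem_Icc.mp hj
    have e1 : (m : ℝ) - j = ((m - j : ℕ) : ℝ) := by
      push_cast [hj2]; ring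
    have e2 : (m : ℝ) + j = ((m + j : ℕ) : ℝ) := by push_cast; ring
    rw [e1, e2, Gamma_nat_half, Gamma_nat_half, Real.Gamma_nat_eq_factorial,
      Real.Gamma_nat_eq_factorial]
    have hf1 : ((m - j)! : ℝ) ≠ 0 := by positivity
    have hf2 : ((m + j)! : ℝ) ≠ 0 := by positivity
    have hpow : (2 : ℕ) * m = (m - j) + (m + j) := by omega
    rw [hpow, pow_add]
    field_simp
    linear_combination ((centralBinom (m - j) : ℝ) * centralBinom (m + j)
      * 4 ^ m * 4 ^ j * 4 ^ (m - j)) * hsq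
  rw [Finset.sum_congr rfl hterm]
  rw [Real.Gamma_nat_eq_factorial, Gamma_nat_half]
  have hkey : (centralBinom m * centralBinom m : ℝ)
      + 2 * ∑ k ∈ range m, (centralBinom k : ℝ) * centralBinom (2 * m - k)
      = 4 ^ (2 * m) := by
    have h := split_sum m
    rw [S_eq] at h
    have := congrArg (Nat.cast : ℕ → ℝ) h.symm
    push_cast at this
    linarith [this]
  have hsum : ∑ j ∈ Finset.Icc 1 m,
      Real.pi * (centralBinom (m - j) * centralBinom (m + j) : ℝ) / 4 ^ (2 * m)
      = Real.pi * (∑ k ∈ range m, (centralBinom k : ℝ) * centralBinom (2 * m - k)) / 4 ^ (2 * m) := by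
    rw [Finset.mul_sum, Finset.sum_div]
    rw [show Finset.Icc 1 m = Finset.Ico 1 (m + 1) by rfl]
    rw [Finset.sum_Ico_eq_sum_range]
    simp only [Nat.add_sub_cancel]
    rw [← Finset.sum_range_reflect
      (fun i => Real.pi * ((centralBinom (m - (1 + i)) : ℝ) * centralBinom (m + (1 + i))) / 4 ^ (2*m)) m]
    refine Finset.sum_congr rfl fun k hk => ?_
    have hk' : k < m := Finset.mem_range.mp hk
    have e1 : m - (1 + (m - 1 - k)) = k := by omega
    have e2 : m + (1 + (m - 1 - k)) = 2 * m - k := by omega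
    rw [e1, e2]
  rw [hsum]
  have hf : ((m)! : ℝ) ≠ 0 := by positivity
  have h1 : (Real.sqrt Real.pi * (centralBinom m : ℝ) * m ! / 4 ^ m / m !) ^ 2
      = Real.pi * ((centralBinom m : ℝ) * centralBinom m) / 4 ^ (2 * m) := by
    rw [two_mul, pow_add, div_pow, div_pow, mul_pow, mul_pow, hsq]
    field_simp
  rw [h1]
  field_simp
  linear_combination (-1 : ℝ) * hkey
end

section
/- The improper integral ∫₀^∞ (sin t)²/t² dt equals π/2. -/
open MeasureTheory Set Filter Real

/-- Auxiliary: the exponential decay derivative. -/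
lemma aux_exp_deriv (c : ℝ) (x : ℝ) :
    HasDerivAt (fun y : ℝ => Real.exp (-(c * y))) (Real.exp (-(c * x)) * -c) x := by
  have h : HasDerivAt (fun y : ℝ => -(c * y)) (-c) x := by
    have h' := ((hasDerivAt_id x).const_mul c).neg
    simp only [id] at h'
    exact h'.congr_deriv (by ring)
  exact h.exp

/-- ∫₀^∞ x e^{-tx} dx = 1/t², together with integrability. -/
lemma aux_intA (t : ℝ) (ht : 0 < t) :
    IntegrableOn (fun x => x * Real.exp (-(t * x))) (Set.Ioi 0) volume ∧
      ∫ x in Set.Ioi (0:ℝ), x * Real.exp (-(t * x)) = 1 / t ^ 2 := by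
  set G : ℝ → ℝ := fun x => -((x / t + 1 / t ^ 2) * Real.exp (-(t * x))) with hG
  have hderiv : ∀ x ∈ Set.Ici (0:ℝ), HasDerivAt G (x * Real.exp (-(t * x))) x := by
    intro x _
    have h1 : HasDerivAt (fun x : ℝ => x / t + 1 / t ^ 2) (1 / t) x :=
      ((hasDerivAt_id x).div_const t).add_const _
    have h2 := aux_exp_deriv t x
    have h := (h1.mul h2).neg
    refine h.congr_deriv ?_
    field_simp
    ring
  have hpos : ∀ x ∈ Set.Ioi (0:ℝ), 0 ≤ x * Real.exp (-(t * x)) := fun x hx =>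
    mul_nonneg (le_of_lt hx) (Real.exp_pos _).le
  have htend : Tendsto G atTop (nhds 0) := by
    have h1 : Tendsto (fun x : ℝ => x * Real.exp (-(t * x))) atTop (nhds 0) := by
      have h := tendsto_rpow_mul_exp_neg_mul_atTop_nhds_zero 1 t ht
      apply h.congr'
      filter_upwards [eventually_gt_atTop (0:ℝ)] with x hx
      rw [Real.rpow_one, neg_mul]
    have h2 : Tendsto (fun x : ℝ => Real.exp (-(t * x))) atTop (nhds 0) := by
      apply Real.tendsto_exp_atBot.comp
      exact tendsto_neg_atBot_iff.mpr ((tendsto_const_mul_atTop_of_pos ht).mpr tendsto_id)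
    have := ((h1.div_const t).add (h2.div_const (t ^ 2))).neg
    simp only [zero_div, add_zero, neg_zero, zero_add] at this
    apply this.congr
    intro x
    simp only [hG]
    ring
  have hint : IntegrableOn (fun x => x * Real.exp (-(t * x))) (Set.Ioi 0) volume :=
    integrableOn_Ioi_deriv_of_nonneg' hderiv hpos htend
  refine ⟨hint, ?_⟩
  have heq := integral_Ioi_of_hasDerivAt_of_tendsto' hderiv hint htend
  rw [heq]
  simp [hG]

/-- ∫₀^∞ sin²t e^{-tx} dt = 2/(x(x²+4)), together with integrability. -/
lemma aux_intB (x : ℝ) (hx : 0 < x) :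
    IntegrableOn (fun t => Real.sin t ^ 2 * Real.exp (-(t * x))) (Set.Ioi 0) volume ∧
      ∫ t in Set.Ioi (0:ℝ), Real.sin t ^ 2 * Real.exp (-(t * x)) = 2 / (x * (x ^ 2 + 4)) := by
  have hx4 : x ^ 2 + 4 ≠ 0 := by positivity
  set F : ℝ → ℝ := fun t => Real.exp (-(x * t)) *
      ((x * Real.cos (2 * t) - 2 * Real.sin (2 * t)) / (2 * (x ^ 2 + 4)) - 1 / (2 * x)) with hF
  have hderiv : ∀ t ∈ Set.Ici (0:ℝ),
      HasDerivAt F (Real.sin t ^ 2 * Real.exp (-(t * x))) t := by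
    intro t _
    have hexp := aux_exp_deriv x t
    have h2t : HasDerivAt (fun t : ℝ => 2 * t) 2 t := by
      simpa using (hasDerivAt_id t).const_mul 2
    have hcos : HasDerivAt (fun t : ℝ => Real.cos (2 * t)) (-Real.sin (2 * t) * 2) t :=
      (Real.hasDerivAt_cos (2 * t)).comp t h2t
    have hsin : HasDerivAt (fun t : ℝ => Real.sin (2 * t)) (Real.cos (2 * t) * 2) t :=
      (Real.hasDerivAt_sin (2 * t)).comp t h2t
    have hinner : HasDerivAt
        (fun t : ℝ => (x * Real.cos (2 * t) - 2 * Real.sin (2 * t)) / (2 * (x ^ 2 + 4)) - 1 / (2 * x))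
        ((x * (-Real.sin (2 * t) * 2) - 2 * (Real.cos (2 * t) * 2)) / (2 * (x ^ 2 + 4))) t :=
      (((hcos.const_mul x).sub (hsin.const_mul 2)).div_const _).sub_const _
    have h := hexp.mul hinner
    refine h.congr_deriv ?_
    rw [Real.sin_sq_eq_half_sub]
    have hxt : -(t * x) = -(x * t) := by ring
    rw [hxt]
    field_simp
    ring
  have hpos : ∀ t ∈ Set.Ioi (0:ℝ), 0 ≤ Real.sin t ^ 2 * Real.exp (-(t * x)) := fun t _ =>
    mul_nonneg (sq_nonneg _) (Real.exp_pos _).le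
  have htend : Tendsto F atTop (nhds 0) := by
    have hbnd : ∀ t : ℝ, ‖F t‖ ≤ ((x + 2) / (2 * (x ^ 2 + 4)) + 1 / (2 * x)) * Real.exp (-(x * t)) := by
      intro t
      have h1 : |x * Real.cos (2 * t) - 2 * Real.sin (2 * t)| ≤ x + 2 := by
        rw [abs_le]
        constructor <;>
          nlinarith [Real.neg_one_le_cos (2 * t), Real.cos_le_one (2 * t),
            Real.neg_one_le_sin (2 * t), Real.sin_le_one (2 * t)]
      have hC : |(x * Real.cos (2 * t) - 2 * Real.sin (2 * t)) / (2 * (x ^ 2 + 4)) - 1 / (2 * x)|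
          ≤ (x + 2) / (2 * (x ^ 2 + 4)) + 1 / (2 * x) := by
        have habs := abs_add_le ((x * Real.cos (2 * t) - 2 * Real.sin (2 * t)) / (2 * (x ^ 2 + 4)))
          (-(1 / (2 * x)))
        rw [← sub_eq_add_neg, abs_neg] at habs
        refine habs.trans ?_
        have hA : |(x * Real.cos (2 * t) - 2 * Real.sin (2 * t)) / (2 * (x ^ 2 + 4))|
            ≤ (x + 2) / (2 * (x ^ 2 + 4)) := by
          rw [abs_div, abs_of_pos (by positivity : (0:ℝ) < 2 * (x ^ 2 + 4))]
          gcongr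
        have hB : |1 / (2 * x)| = 1 / (2 * x) := abs_of_pos (by positivity)
        rw [hB]
        gcongr
      rw [hF]
      simp only [Real.norm_eq_abs, abs_mul, Real.abs_exp]
      rw [mul_comm]
      gcongr
    have h2 : Tendsto (fun t : ℝ => Real.exp (-(x * t))) atTop (nhds 0) := by
      apply Real.tendsto_exp_atBot.comp
      exact tendsto_neg_atBot_iff.mpr ((tendsto_const_mul_atTop_of_pos hx).mpr tendsto_id)
    have h3 := h2.const_mul ((x + 2) / (2 * (x ^ 2 + 4)) + 1 / (2 * x))
    rw [mul_zero] at h3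
    exact squeeze_zero_norm hbnd h3
  have hint : IntegrableOn (fun t => Real.sin t ^ 2 * Real.exp (-(t * x))) (Set.Ioi 0) volume :=
    integrableOn_Ioi_deriv_of_nonneg' hderiv hpos htend
  refine ⟨hint, ?_⟩
  have heq := integral_Ioi_of_hasDerivAt_of_tendsto' hderiv hint htend
  rw [heq]
  simp only [hF, mul_zero, neg_zero, Real.exp_zero, Real.cos_zero, Real.sin_zero, one_mul,
    mul_one, mul_zero, sub_zero, zero_sub]
  field_simp
  ring

/-- ∫₀^∞ 2/(x²+4) dx = π/2. -/
lemma aux_intC : ∫ x in Set.Ioi (0:ℝ), 2 / (x ^ 2 + 4) = Real.pi / 2 := by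
  have hderiv : ∀ x ∈ Set.Ici (0:ℝ),
      HasDerivAt (fun x : ℝ => Real.arctan (x / 2)) (2 / (x ^ 2 + 4)) x := by
    intro x _
    have h := (Real.hasDerivAt_arctan (x / 2)).comp x ((hasDerivAt_id x).div_const 2)
    refine h.congr_deriv ?_
    have h1 : (1:ℝ) + (x / 2) ^ 2 ≠ 0 := by positivity
    field_simp
    ring
  have hpos : ∀ x ∈ Set.Ioi (0:ℝ), (0:ℝ) ≤ 2 / (x ^ 2 + 4) := fun x _ => by positivity
  have htend : Tendsto (fun x : ℝ => Real.arctan (x / 2)) atTop (nhds (Real.pi / 2)) := by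
    exact (Real.tendsto_arctan_atTop.mono_right nhdsWithin_le_nhds).comp
      (Tendsto.atTop_div_const two_pos tendsto_id)
  have hint := integrableOn_Ioi_deriv_of_nonneg' hderiv hpos htend
  have heq := integral_Ioi_of_hasDerivAt_of_tendsto' hderiv hint htend
  rw [heq]
  simp

/-- Integrability of sin²t/t² on (0,∞). -/
lemma aux_intD : IntegrableOn (fun t => Real.sin t ^ 2 / t ^ 2) (Set.Ioi 0) volume := by
  have hmeas : Measurable (fun t : ℝ => Real.sin t ^ 2 / t ^ 2) :=
    (Real.measurable_sin.pow_const 2).div (measurable_id.pow_const 2)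
  have h1 : IntegrableOn (fun t => Real.sin t ^ 2 / t ^ 2) (Set.Ioc 0 1) volume := by
    apply Integrable.mono' (integrable_const (1:ℝ)) hmeas.aestronglyMeasurable.restrict
    filter_upwards [ae_restrict_mem measurableSet_Ioc] with t ht
    rw [Real.norm_eq_abs, abs_div, abs_of_nonneg (sq_nonneg _), abs_of_nonneg (sq_nonneg _)]
    rw [div_le_one (pow_pos ht.1 2)]
    exact Real.sin_sq_le_sq
  have h2 : IntegrableOn (fun t => Real.sin t ^ 2 / t ^ 2) (Set.Ioi 1) volume := by
    apply Integrable.mono' (integrableOn_Ioi_rpow_of_lt (by norm_num : (-2:ℝ) < -1) one_pos)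
      hmeas.aestronglyMeasurable.restrict
    filter_upwards [ae_restrict_mem measurableSet_Ioi] with t ht
    have ht0 : (0:ℝ) < t := lt_trans one_pos ht
    rw [Real.norm_eq_abs, abs_div, abs_of_nonneg (sq_nonneg _), abs_of_nonneg (sq_nonneg _)]
    have hrw : t ^ (-2:ℝ) = 1 / t ^ 2 := by
      rw [Real.rpow_neg ht0.le, one_div, ← Real.rpow_natCast t 2]
      norm_num
    rw [hrw, div_le_div_iff_of_pos_right (pow_pos ht0 2)]
    exact Real.sin_sq_le_one t
  have h := h1.union h2
  rwa [Set.Ioc_union_Ioi_eq_Ioi zero_le_one] at h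

noncomputable def auxf (t x : ℝ) : ℝ := Real.sin t ^ 2 * (x * Real.exp (-(t * x)))

set_option maxHeartbeats 1000000 in
theorem stmt15 : ∫ t in Set.Ioi (0 : ℝ), Real.sin t ^ 2 / t ^ 2 = Real.pi / 2 := by
  have hfcont : Continuous (Function.uncurry auxf) := by
    have h : Function.uncurry auxf
        = fun p : ℝ × ℝ => Real.sin p.1 ^ 2 * (p.2 * Real.exp (-(p.1 * p.2))) := rfl
    rw [h]
    fun_prop
  -- inner integral over x
  have key1 : ∀ t ∈ Set.Ioi (0:ℝ), ∫ x in Set.Ioi (0:ℝ), auxf t x = Real.sin t ^ 2 / t ^ 2 := by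
    intro t ht
    simp only [auxf]
    rw [integral_const_mul, (aux_intA t ht).2]
    ring
  -- integrability on the product
  have hprod : Integrable (Function.uncurry auxf)
      ((volume.restrict (Set.Ioi 0)).prod (volume.restrict (Set.Ioi 0))) := by
    rw [integrable_prod_iff hfcont.aestronglyMeasurable]
    constructor
    · filter_upwards [ae_restrict_mem measurableSet_Ioi] with t ht
      have h := (aux_intA t ht).1.const_mul (Real.sin t ^ 2)
      exact h.congr (Filter.Eventually.of_forall fun x => rfl)
    · apply Integrable.congr aux_intD
      filter_upwards [ae_restrict_mem measurableSet_Ioi] with t ht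
      rw [← key1 t ht, eq_comm]
      apply setIntegral_congr_fun measurableSet_Ioi
      intro x hx
      have h0 : 0 ≤ auxf t x :=
        mul_nonneg (sq_nonneg _) (mul_nonneg (le_of_lt hx) (Real.exp_pos _).le)
      simp only [Function.uncurry_apply_pair, Real.norm_eq_abs, abs_of_nonneg h0]
  -- inner integral over t
  have key2 : ∀ x ∈ Set.Ioi (0:ℝ), ∫ t in Set.Ioi (0:ℝ), auxf t x = 2 / (x ^ 2 + 4) := by
    intro x hx
    have hx0 : (0:ℝ) < x := hx
    have hrw : ∀ t : ℝ, auxf t x = x * (Real.sin t ^ 2 * Real.exp (-(t * x))) := by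
      intro t; simp only [auxf]; ring
    simp only [hrw]
    rw [integral_const_mul, (aux_intB x hx0).2]
    field_simp
  calc ∫ t in Set.Ioi (0:ℝ), Real.sin t ^ 2 / t ^ 2
      = ∫ t in Set.Ioi (0:ℝ), ∫ x in Set.Ioi (0:ℝ), auxf t x := by
        apply setIntegral_congr_fun measurableSet_Ioi
        intro t ht
        exact (key1 t ht).symm
    _ = ∫ x in Set.Ioi (0:ℝ), ∫ t in Set.Ioi (0:ℝ), auxf t x := integral_integral_swap hprod
    _ = ∫ x in Set.Ioi (0:ℝ), 2 / (x ^ 2 + 4) := by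
        apply setIntegral_congr_fun measurableSet_Ioi
        intro x hx
        exact key2 x hx
    _ = Real.pi / 2 := aux_intC
end
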